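/- Suppose θ < 0 and T is an SPT of G rooted at s. If dist_G(x₀) + ω'(e₀) ≥ dist_G(y₀), then T is an SPT of G' rooted at s; in particular dist_{G'}(v) = dist_G(v) for every v ∈ V. -/

import Mathlib

namespace DynSPT

variable {V : Type*}

/-- The list of consecutive edges of a path given as a list of vertices. -/
def edgeList (l : List V) : List (V × V) := l.zip l.tail

/-- The length of a path with respect to the weight function `ω`. -/
def len (ω : V → V → ℝ) (l : List V) : ℝ :=
  ((edgeList l).map fun p => ω p.1 p.2).sum

/-- `l` is a path in the directed graph with edge relation `E`. -/
def IsWalk (E : V → V → Prop) (l : List V) : Prop := l ≠ [] ∧ l.Chain' E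

/-- `l` is a path from `u` to `v` in the directed graph with edge relation `E`. -/
def IsWalkFrom (E : V → V → Prop) (l : List V) (u v : V) : Prop :=
  IsWalk E l ∧ l.head? = some u ∧ l.getLast? = some v

/-- The path `l` traverses the edge `e`. -/
def Traverses (l : List V) (e : V × V) : Prop := e ∈ edgeList l

/-- `l` is a cycle: a path with at least one edge whose first and last vertices agree. -/
def IsCycle (E : V → V → Prop) (l : List V) : Prop :=
  ∃ v, IsWalkFrom E l v v ∧ 2 ≤ l.length

/-- The weighted directed graph `(E, ω)` has a negative cycle. -/
def HasNegCycle (E : V → V → Prop) (ω : V → V → ℝ) : Prop :=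
  ∃ l, IsCycle E l ∧ len ω l < 0

/-- The weighted directed graph `(E, ω)` has a zero-length cycle. -/
def HasZeroCycle (E : V → V → Prop) (ω : V → V → ℝ) : Prop :=
  ∃ l, IsCycle E l ∧ len ω l = 0

/-- The distance from `s` to `v`: the infimum of the lengths of paths from `s` to `v`. -/
noncomputable def dist (E : V → V → Prop) (ω : V → V → ℝ) (s v : V) : ℝ :=
  sInf {L : ℝ | ∃ l, IsWalkFrom E l s v ∧ len ω l = L}

/-- A spanning tree of the directed graph `E` rooted at `s`, recorded by the parent
function together with, for every vertex `v`, the tree path from `s` to `v`. -/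
structure RootedTree (E : V → V → Prop) (s : V) where
  parent : V → V
  path : V → List V
  path_root : path s = [s]
  parent_edge : ∀ v, v ≠ s → E (parent v) v
  path_eq : ∀ v, v ≠ s → path v = path (parent v) ++ [v]
  path_isWalkFrom : ∀ v, IsWalkFrom E (path v) s v

/-- `(a, b)` is an edge of the rooted tree `T`. -/
def RootedTree.IsEdge {E : V → V → Prop} {s : V} (T : RootedTree E s) (a b : V) : Prop :=
  b ≠ s ∧ T.parent b = a

/-- `T` is a shortest-path tree for the weight function `ω`:
every tree path from the root is a shortest path. -/
def IsSPT {E : V → V → Prop} {s : V} (ω : V → V → ℝ) (T : RootedTree E s) : Prop :=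
  ∀ v, len ω (T.path v) = dist E ω s v

-- auxiliary lemmas
lemma edgeList_single (a : V) : edgeList [a] = [] := rfl

lemma edgeList_cons_cons (a b : V) (t : List V) :
    edgeList (a :: b :: t) = (a, b) :: edgeList (b :: t) := rfl

lemma len_single (ω : V → V → ℝ) (a : V) : len ω [a] = 0 := rfl

lemma len_cons_cons (ω : V → V → ℝ) (a b : V) (t : List V) :
    len ω (a :: b :: t) = ω a b + len ω (b :: t) := by
  simp [len, edgeList_cons_cons]

lemma edgeList_split (p : List V) (x : V) (q : List V) :
    edgeList (p ++ x :: q) = edgeList (p ++ [x]) ++ edgeList (x :: q) := by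
  induction p with
  | nil => simp [edgeList_single]
  | cons a p ih =>
    cases p with
    | nil => simp [edgeList_cons_cons, edgeList_single]
    | cons b p' =>
      simp only [List.cons_append, edgeList_cons_cons] at ih ⊢
      rw [ih]

lemma len_split (ω : V → V → ℝ) (p : List V) (x : V) (q : List V) :
    len ω (p ++ x :: q) = len ω (p ++ [x]) + len ω (x :: q) := by
  unfold len; rw [edgeList_split, List.map_append, List.sum_append]

lemma head?_split (p : List V) (x : V) (q : List V) :
    (p ++ x :: q).head? = (p ++ [x]).head? := by
  cases p <;> simp

lemma getLast?_split (p : List V) (x : V) (q : List V) :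
    (p ++ x :: q).getLast? = (x :: q).getLast? := by
  rw [List.getLast?_append, Option.or_of_isSome (by simp [List.getLast?_isSome])]

lemma isWalkFrom_split {E : V → V → Prop} {u v : V} {p : List V} {x : V} {q : List V}
    (h : IsWalkFrom E (p ++ x :: q) u v) :
    IsWalkFrom E (p ++ [x]) u x ∧ IsWalkFrom E (x :: q) x v := by
  obtain ⟨⟨-, hc⟩, hh, hl⟩ := h
  simp only [List.Chain'] at hc
  rw [List.isChain_split] at hc
  refine ⟨⟨⟨by simp, hc.1⟩, ?_, ?_⟩, ⟨⟨by simp, hc.2⟩, rfl, ?_⟩⟩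
  · rw [← head?_split p x q]; exact hh
  · simp [List.getLast?_append]
  · rw [← getLast?_split p x q]; exact hl

lemma isWalkFrom_join {E : V → V → Prop} {u v : V} {p : List V} {x : V} {q : List V}
    (h₁ : IsWalkFrom E (p ++ [x]) u x) (h₂ : IsWalkFrom E (x :: q) x v) :
    IsWalkFrom E (p ++ x :: q) u v := by
  obtain ⟨⟨-, hc₁⟩, hh₁, -⟩ := h₁
  obtain ⟨⟨-, hc₂⟩, -, hl₂⟩ := h₂
  exact ⟨⟨by simp, List.isChain_split.2 ⟨hc₁, hc₂⟩⟩,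
    by rw [head?_split]; exact hh₁, by rw [getLast?_split]; exact hl₂⟩

lemma len_congr {ω ω' : V → V → ℝ} {l : List V}
    (h : ∀ e ∈ edgeList l, ω' e.1 e.2 = ω e.1 e.2) : len ω' l = len ω l := by
  unfold len
  exact congrArg List.sum (List.map_congr_left fun e he => h e he)

lemma len_le_len {ω ω' : V → V → ℝ} (h : ∀ a b, ω' a b ≤ ω a b) (l : List V) :
    len ω' l ≤ len ω l := by
  exact List.sum_le_sum fun e _ => h e.1 e.2

lemma cycle_nonneg {E : V → V → Prop} {ω : V → V → ℝ} (hG : ¬ HasNegCycle E ω)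
    {c : List V} (hc : IsCycle E c) : 0 ≤ len ω c := by
  by_contra h
  exact hG ⟨c, hc, lt_of_not_ge h⟩

lemma not_nodup_decomp {l : List V} (h : ¬ l.Nodup) :
    ∃ a x b c, l = a ++ x :: (b ++ x :: c) := by
  induction l with
  | nil => simp at h
  | cons y t ih =>
    by_cases hy : y ∈ t
    · obtain ⟨b, c, rfl⟩ := List.append_of_mem hy
      exact ⟨[], y, b, c, rfl⟩
    · have ht : ¬ t.Nodup := by simpa [List.nodup_cons, hy] using h
      obtain ⟨a, x, b, c, rfl⟩ := ih ht
      exact ⟨y :: a, x, b, c, rfl⟩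

lemma reduce {E : V → V → Prop} {ω : V → V → ℝ} (hG : ¬ HasNegCycle E ω) :
    ∀ n (l : List V) (u v : V), l.length ≤ n → IsWalkFrom E l u v →
      ∃ l', IsWalkFrom E l' u v ∧ l'.Nodup ∧ len ω l' ≤ len ω l := by
  intro n
  induction n with
  | zero =>
    intro l u v hlen hw
    rw [Nat.le_zero, List.length_eq_zero_iff] at hlen
    exact absurd hlen hw.1.1
  | succ n ih =>
    intro l u v hlen hw
    by_cases hd : l.Nodup
    · exact ⟨l, hw, hd, le_rfl⟩
    · obtain ⟨a, x, b, c, rfl⟩ := not_nodup_decomp hd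
      obtain ⟨h₁, h₂⟩ := isWalkFrom_split hw
      rw [show b ++ x :: c = (b ++ [x]) ++ c by simp] at h₂
      rw [show x :: ((b ++ [x]) ++ c) = (x :: b) ++ x :: c by simp] at h₂
      obtain ⟨h₃, h₄⟩ := isWalkFrom_split h₂
      have hcyc : 0 ≤ len ω ((x :: b) ++ [x]) :=
        cycle_nonneg hG ⟨x, h₃, by simp⟩
      have hjoin := isWalkFrom_join h₁ h₄
      have hlen' : (a ++ x :: c).length ≤ n := by
        simp only [List.length_append, List.length_cons] at hlen ⊢; omega
      obtain ⟨l', hw', hd', hle'⟩ := ih (a ++ x :: c) u v hlen' hjoin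
      refine ⟨l', hw', hd', hle'.trans ?_⟩
      rw [len_split ω a x c, len_split ω a x (b ++ x :: c),
        show x :: (b ++ x :: c) = (x :: b) ++ x :: c by simp,
        len_split ω (x :: b) x c]
      linarith

lemma exists_lower_bound {E : V → V → Prop} {ω : V → V → ℝ} [Fintype V]
    (hG : ¬ HasNegCycle E ω) :
    ∃ B : ℝ, ∀ u v (l : List V), IsWalkFrom E l u v → B ≤ len ω l := by
  classical
  set F : Finset ℝ := insert 0 ((Finset.univ : Finset (V × V)).image fun p => ω p.1 p.2) with hF
  have hFne : F.Nonempty := ⟨0, by simp [hF]⟩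
  set C : ℝ := F.min' hFne with hC
  have hC0 : C ≤ 0 := Finset.min'_le _ _ (by simp [hF])
  have hCle : ∀ a b : V, C ≤ ω a b := fun a b =>
    Finset.min'_le _ _ (by simp [hF])
  have hsum : ∀ L : List ℝ, (∀ x ∈ L, C ≤ x) → (L.length : ℝ) * C ≤ L.sum := by
    intro L
    induction L with
    | nil => simp
    | cons r t iht =>
      intro hmem
      have := iht fun x hx => hmem x (List.mem_cons_of_mem _ hx)
      have hr := hmem r (List.mem_cons_self)
      simp only [List.length_cons, List.sum_cons]
      push_cast
      nlinarith
  refine ⟨(Fintype.card V : ℝ) * C, fun u v l hw => ?_⟩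
  obtain ⟨l', hw', hd', hle'⟩ := reduce hG l.length l u v le_rfl hw
  refine le_trans ?_ hle'
  have h1 : (edgeList l').length ≤ Fintype.card V := by
    have := hd'.length_le_card
    simp [edgeList]; omega
  calc (Fintype.card V : ℝ) * C ≤ ((edgeList l').map fun p => ω p.1 p.2).length * C := by
        have : (((edgeList l').map fun p => ω p.1 p.2).length : ℝ) ≤ (Fintype.card V : ℝ) := by
          simp; exact_mod_cast h1
        nlinarith
    _ ≤ len ω l' := by
        refine hsum _ ?_
        simp only [List.mem_map]
        rintro x ⟨e, -, rfl⟩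
        exact hCle e.1 e.2

lemma exists_split_last {l : List V} {e : V × V} (h : e ∈ edgeList l) :
    ∃ p q, l = p ++ e.1 :: e.2 :: q ∧ e ∉ edgeList (e.2 :: q) := by
  induction l with
  | nil => simp [edgeList] at h
  | cons a t ih =>
    by_cases ht : e ∈ edgeList t
    · obtain ⟨p, q, rfl, hq⟩ := ih ht
      exact ⟨a :: p, q, rfl, hq⟩
    · cases t with
      | nil => simp [edgeList] at h
      | cons b t' =>
        rw [edgeList_cons_cons, List.mem_cons] at h
        rcases h with h | h
        · subst h
          exact ⟨[], t', rfl, ht⟩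
        · exact absurd h ht

lemma isWalkFrom_trans {E : V → V → Prop} {u a v : V} {l₁ l₂ : List V}
    (h₁ : IsWalkFrom E l₁ u a) (h₂ : IsWalkFrom E l₂ a v) :
    ∃ l, IsWalkFrom E l u v ∧ ∀ ω : V → V → ℝ, len ω l = len ω l₁ + len ω l₂ := by
  obtain ⟨b, q, rfl⟩ : ∃ b q, l₂ = b :: q := by
    cases l₂ with
    | nil => exact absurd rfl h₂.1.1
    | cons b q => exact ⟨b, q, rfl⟩
  have hb : b = a := by have := h₂.2.1; simp at this; exact this
  subst hb
  have hne : l₁ ≠ [] := h₁.1.1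
  have hdec : l₁.dropLast ++ [l₁.getLast hne] = l₁ := List.dropLast_append_getLast hne
  have hga : l₁.getLast hne = u → True := fun _ => trivial
  have hlast : l₁.getLast hne = b := by
    have := h₁.2.2
    rw [List.getLast?_eq_getLast hne] at this
    exact Option.some_injective _ this
  rw [hlast] at hdec
  have h₁' : IsWalkFrom E (l₁.dropLast ++ [b]) u b := by rw [hdec]; exact h₁
  refine ⟨l₁.dropLast ++ b :: q, isWalkFrom_join h₁' h₂, fun ω => ?_⟩
  rw [len_split ω _ b q, hdec]

theorem statement_11
    {V : Type*} [Fintype V] (E : V → V → Prop) (ω ω' : V → V → ℝ) (s x₀ y₀ : V)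
    (hE₀ : E x₀ y₀)
    (hreach : ∀ v, ∃ l, IsWalkFrom E l s v)
    (hω' : ∀ a b, (a, b) ≠ (x₀, y₀) → ω' a b = ω a b)
    (hG : ¬ HasNegCycle E ω)
    (hθ : ω' x₀ y₀ - ω x₀ y₀ < 0)
    (T : RootedTree E s) (hT : IsSPT ω T)
    (hge : dist E ω s y₀ ≤ dist E ω s x₀ + ω' x₀ y₀) :
    IsSPT ω' T ∧ ∀ v, dist E ω' s v = dist E ω s v := by
  classical
  obtain ⟨B, hB⟩ := exists_lower_bound hG
  have hω'le : ∀ a b, ω' a b ≤ ω a b := by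
    intro a b
    by_cases h : (a, b) = (x₀, y₀)
    · obtain ⟨rfl, rfl⟩ := Prod.mk.injEq .. ▸ h
      linarith
    · rw [hω' a b h]
  -- basic facts about dist (for ω)
  have hbdd : ∀ v, BddBelow {L : ℝ | ∃ l, IsWalkFrom E l s v ∧ len ω l = L} := by
    rintro v
    exact ⟨B, by rintro L ⟨l, hl, rfl⟩; exact hB s v l hl⟩
  have hne : ∀ v, {L : ℝ | ∃ l, IsWalkFrom E l s v ∧ len ω l = L}.Nonempty := by
    intro v
    obtain ⟨l, hl⟩ := hreach v
    exact ⟨len ω l, l, hl, rfl⟩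
  have dist_le_len : ∀ v (l : List V), IsWalkFrom E l s v → dist E ω s v ≤ len ω l :=
    fun v l hl => csInf_le (hbdd v) ⟨l, hl, rfl⟩
  have exists_lt : ∀ v, ∀ ε > (0:ℝ), ∃ l, IsWalkFrom E l s v ∧ len ω l < dist E ω s v + ε := by
    intro v ε hε
    obtain ⟨L, ⟨l, hl, rfl⟩, hlt⟩ := Real.lt_sInf_add_pos (hne v) hε
    exact ⟨l, hl, hlt⟩
  -- triangle inequality
  have tri : ∀ v (q : List V), IsWalkFrom E q y₀ v → dist E ω s v ≤ dist E ω s y₀ + len ω q := by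
    intro v q hq
    refine le_of_forall_pos_le_add fun ε hε => ?_
    obtain ⟨p, hp, hplt⟩ := exists_lt y₀ ε hε
    obtain ⟨l, hl, hlen⟩ := isWalkFrom_trans hp hq
    calc dist E ω s v ≤ len ω l := dist_le_len v l hl
      _ = len ω p + len ω q := hlen ω
      _ ≤ dist E ω s y₀ + ε + len ω q := by linarith
      _ = dist E ω s y₀ + len ω q + ε := by ring
  -- the key induction
  have key : ∀ n (l : List V) (v : V), l.length ≤ n → IsWalkFrom E l s v →
      dist E ω s v ≤ len ω' l := by
    intro n
    induction n with
    | zero =>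
      intro l v hl hw
      rw [Nat.le_zero, List.length_eq_zero_iff] at hl
      exact absurd hl hw.1.1
    | succ n ih =>
      intro l v hl hw
      by_cases htr : Traverses l (x₀, y₀)
      · obtain ⟨p, q, rfl, hq⟩ := exists_split_last htr
        obtain ⟨h₁, h₂⟩ := isWalkFrom_split hw
        have h₄ : IsWalkFrom E (y₀ :: q) y₀ v :=
          (isWalkFrom_split (p := [x₀]) (x := y₀) (q := q) h₂).2
        have ihp : dist E ω s x₀ ≤ len ω' (p ++ [x₀]) := by
          refine ih _ x₀ ?_ h₁
          simp only [List.length_append, List.length_cons, List.length_nil] at hl ⊢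
          omega
        have hq' : len ω' (y₀ :: q) = len ω (y₀ :: q) := by
          refine len_congr fun e he => hω' e.1 e.2 fun hc => ?_
          have he' : e = (x₀, y₀) := by rw [← hc]
          rw [he'] at he
          exact hq he
        calc dist E ω s v ≤ dist E ω s y₀ + len ω (y₀ :: q) := tri v _ h₄
          _ ≤ dist E ω s x₀ + ω' x₀ y₀ + len ω (y₀ :: q) := by linarith
          _ ≤ len ω' (p ++ [x₀]) + ω' x₀ y₀ + len ω' (y₀ :: q) := by rw [hq']; linarith
          _ = len ω' (p ++ x₀ :: y₀ :: q) := by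
            rw [len_split ω' p x₀ (y₀ :: q), len_cons_cons]; ring
      · have heq : len ω' l = len ω l := by
          refine len_congr fun e he => hω' e.1 e.2 fun hc => ?_
          exact htr (show (x₀, y₀) ∈ edgeList l from by rw [show (x₀, y₀) = e from by rw [← hc]]; exact he)
        rw [heq]
        exact dist_le_len v l hw
  have hbdd' : ∀ v, BddBelow {L : ℝ | ∃ l, IsWalkFrom E l s v ∧ len ω' l = L} := by
    intro v
    exact ⟨dist E ω s v, by rintro L ⟨l, hl, rfl⟩; exact key l.length l v le_rfl hl⟩
  have hdist' : ∀ v, dist E ω' s v = dist E ω s v := by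
    intro v
    refine le_antisymm ?_ ?_
    · refine le_of_forall_pos_le_add fun ε hε => ?_
      obtain ⟨l, hl, hlt⟩ := exists_lt v ε hε
      calc dist E ω' s v ≤ len ω' l := csInf_le (hbdd' v) ⟨l, hl, rfl⟩
        _ ≤ len ω l := len_le_len hω'le l
        _ ≤ dist E ω s v + ε := le_of_lt hlt
    · refine le_csInf ?_ ?_
      · obtain ⟨l, hl⟩ := hreach v
        exact ⟨len ω' l, l, hl, rfl⟩
      · rintro L ⟨l, hl, rfl⟩
        exact key l.length l v le_rfl hl
  refine ⟨fun v => ?_, hdist'⟩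
  have h1 : dist E ω' s v ≤ len ω' (T.path v) := csInf_le (hbdd' v) ⟨_, T.path_isWalkFrom v, rfl⟩
  have h2 : len ω' (T.path v) ≤ len ω (T.path v) := len_le_len hω'le _
  have h3 := hT v
  rw [hdist' v]
  rw [hdist' v] at h1
  linarith


end DynSPT
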